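/- Let G be a graph and let H be obtained from G and a path P_3 by joining a pendant vertex of P_3 to a vertex of G by an edge. Then the multiplicity of 1 as a Laplacian eigenvalue of H equals the multiplicity of 1 as a Laplacian eigenvalue of G. -/

import Mathlib

open SimpleGraph Matrix Polynomial

/-- The Laplacian matrix of a simple graph over `ℝ`. -/
noncomputable def lapR {V : Type} [Fintype V] [DecidableEq V] (G : SimpleGraph V) :
    Matrix V V ℝ :=
  letI := Classical.decRel G.Adj
  G.lapMatrix ℝ

/-- The multiset of Laplacian eigenvalues of a graph, counted with multiplicity,
given as the roots of the characteristic polynomial of the Laplacian matrix. -/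
noncomputable def lapEigs {V : Type} [Fintype V] [DecidableEq V] (G : SimpleGraph V) :
    Multiset ℝ :=
  (lapR G).charpoly.roots

/-- `m_G[0,1)`: the number of Laplacian eigenvalues of `G` in `[0,1)`, with multiplicity. -/
noncomputable def mIco01 {V : Type} [Fintype V] [DecidableEq V] (G : SimpleGraph V) : ℕ :=
  letI : DecidablePred (fun x : ℝ => 0 ≤ x ∧ x < 1) := Classical.decPred _
  Multiset.card ((lapEigs G).filter (fun x => 0 ≤ x ∧ x < 1))

/-- `m_G(μ)`: the multiplicity of `μ` as a Laplacian eigenvalue of `G`. -/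
noncomputable def mEig {V : Type} [Fintype V] [DecidableEq V] (G : SimpleGraph V) (μ : ℝ) : ℕ :=
  Multiset.count μ (lapEigs G)

/-- The graph obtained from `G` and the path `P_m` by joining a pendant (end) vertex of `P_m`
to the vertex `v` of `G` by an edge. The path vertices are `Sum.inr 0, …, Sum.inr (m-1)` with
edges `i ↔ i+1`, and the new edge joins `Sum.inl v` to the end vertex `Sum.inr 0`. -/
def attachPath {V : Type} (G : SimpleGraph V) (v : V) (m : ℕ) : SimpleGraph (V ⊕ Fin m) :=
  SimpleGraph.fromRel (fun a b =>
    (∃ x y : V, a = Sum.inl x ∧ b = Sum.inl y ∧ G.Adj x y) ∨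
    (∃ i j : Fin m, a = Sum.inr i ∧ b = Sum.inr j ∧ (i : ℕ) + 1 = (j : ℕ)) ∨
    (∃ i : Fin m, a = Sum.inl v ∧ b = Sum.inr i ∧ (i : ℕ) = 0))

/-
The Laplacian is symmetric, so the multiplicity of 1 as a root of its characteristic polynomial is
the dimension of its 1-eigenspace, and it suffices to match the 1-eigenspaces of `H` and `G`.
Write `p₀ p₁ p₂` for the path, `p₀` joined to `v`. At the leaf `p₂` the equation `L x = x` reads
`x p₂ - x p₁ = x p₂`, so `x p₁ = 0`; then the rows at `p₁` and `p₀` force `x p₂ = -x p₀` and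
`x p₀ = x v`. Hence the edge `v p₀` contributes nothing at `v`, the restriction of `x` to `G` is
a 1-eigenvector of `L G`, and conversely every such vector extends uniquely to one of `L H`.
-/

open Module End

lemma LinearMap.IsSymmetric.finrank_eigenspace_eq_rootMultiplicity {𝕜 E : Type*} [RCLike 𝕜]
    [NormedAddCommGroup E] [InnerProductSpace 𝕜 E] [FiniteDimensional 𝕜 E]
    {T : Module.End 𝕜 E} (hT : T.IsSymmetric) (μ : 𝕜) :
    finrank 𝕜 (eigenspace T μ) = T.charpoly.rootMultiplicity μ := by
  rw [← hT.isFinitelySemisimple.maxGenEigenspace_eq_eigenspace,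
    LinearMap.finrank_maxGenEigenspace_eq]

lemma LinearEquiv.eigenspace_conj {R M N : Type*} [CommRing R] [AddCommGroup M] [Module R M]
    [AddCommGroup N] [Module R N] (e : M ≃ₗ[R] N) (f : Module.End R M) (μ : R) :
    eigenspace (e.conj f) μ = (eigenspace f μ).map (e : M →ₗ[R] N) := by
  ext x
  rw [Submodule.mem_map_equiv, mem_eigenspace_iff, mem_eigenspace_iff,
    LinearEquiv.conj_apply_apply, ← e.eq_symm_apply, map_smul]

lemma Matrix.IsHermitian.count_roots_charpoly_eq_finrank_eigenspace {𝕜 n : Type*} [RCLike 𝕜]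
    [Fintype n] [DecidableEq n] {A : Matrix n n 𝕜} (hA : A.IsHermitian) (μ : 𝕜) :
    A.charpoly.roots.count μ = finrank 𝕜 (eigenspace (toLin' A) μ) := by
  have hT : toEuclideanLin A = (WithLp.linearEquiv 2 𝕜 (n → 𝕜)).symm.conj (toLin' A) := rfl
  rw [count_roots, ← charpoly_toLin',
    ← LinearEquiv.charpoly_conj (WithLp.linearEquiv 2 𝕜 (n → 𝕜)).symm, ← hT,
    ← (isSymmetric_toEuclideanLin_iff.mpr hA).finrank_eigenspace_eq_rootMultiplicity, hT,
    LinearEquiv.eigenspace_conj, LinearEquiv.finrank_map_eq]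

section AttachPath
variable {V : Type} {G : SimpleGraph V} {v : V} {m : ℕ}

@[simp]
lemma attachPath_adj_inl_inl {u w : V} :
    (attachPath G v m).Adj (.inl u) (.inl w) ↔ G.Adj u w := by
  simp only [attachPath, fromRel_adj]
  constructor
  · rintro ⟨-, ⟨_, _, _, _, h⟩ | ⟨_, _, h, _⟩ | ⟨_, _, h, _⟩ |
      ⟨_, _, _, _, h⟩ | ⟨_, _, h, _⟩ | ⟨_, _, h, _⟩⟩ <;> simp_all [G.adj_comm]
  · intro h
    exact ⟨by simp [G.ne_of_adj h], .inl (.inl ⟨u, w, rfl, rfl, h⟩)⟩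

@[simp]
lemma attachPath_adj_inl_inr [NeZero m] {u : V} {i : Fin m} :
    (attachPath G v m).Adj (.inl u) (.inr i) ↔ u = v ∧ i = 0 := by
  simp only [attachPath, fromRel_adj]
  constructor
  · rintro ⟨-, ⟨_, _, _, h, _⟩ | ⟨_, _, h, _⟩ | ⟨_, _, _, _⟩ |
      ⟨_, _, _, h, _⟩ | ⟨_, _, h, _⟩ | ⟨_, _, h, _⟩⟩ <;> simp_all [Fin.val_eq_zero_iff]
  · rintro ⟨rfl, rfl⟩
    exact ⟨by simp, .inl (.inr (.inr ⟨0, rfl, rfl, rfl⟩))⟩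

@[simp]
lemma attachPath_adj_inr_inl [NeZero m] {u : V} {i : Fin m} :
    (attachPath G v m).Adj (.inr i) (.inl u) ↔ u = v ∧ i = 0 := by
  rw [adj_comm, attachPath_adj_inl_inr]

@[simp]
lemma attachPath_adj_inr_inr {i j : Fin m} :
    (attachPath G v m).Adj (.inr i) (.inr j) ↔ (pathGraph m).Adj i j := by
  simp only [attachPath, fromRel_adj, pathGraph_adj]
  constructor
  · rintro ⟨-, ⟨_, _, h, _⟩ | ⟨_, _, _, _, _⟩ | ⟨_, h, _⟩ |
      ⟨_, _, h, _⟩ | ⟨_, _, _, _, _⟩ | ⟨_, h, _⟩⟩ <;> simp_all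
  · rintro (h | h)
    · exact ⟨by simp [Fin.ext_iff]; omega, .inl (.inr (.inl ⟨i, j, rfl, rfl, h⟩))⟩
    · exact ⟨by simp [Fin.ext_iff]; omega, .inr (.inr (.inl ⟨j, i, rfl, rfl, h⟩))⟩

end AttachPath

section Laplacian
open scoped Classical
variable {V : Type} [Fintype V] [DecidableEq V]

lemma lapR_mulVec_apply (G : SimpleGraph V) (x : V → ℝ) (a : V) :
    (lapR G *ᵥ x) a = ∑ b, if G.Adj a b then x a - x b else 0 := by
  rw [lapR, lapMatrix_mulVec_apply, degree_eq_sum_if_adj, Finset.sum_mul,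
    neighborFinset_eq_filter, Finset.sum_filter, ← Finset.sum_sub_distrib]
  refine Finset.sum_congr rfl fun b _ => ?_
  split_ifs <;> ring

lemma isHermitian_lapR (G : SimpleGraph V) : (lapR G).IsHermitian :=
  (posSemidef_lapMatrix ℝ G).isHermitian

variable {G : SimpleGraph V} {v : V} {m : ℕ} [NeZero m]

lemma lapR_attachPath_mulVec_inl (x : V ⊕ Fin m → ℝ) (u : V) :
    (lapR (attachPath G v m) *ᵥ x) (.inl u)
      = (lapR G *ᵥ (x ∘ .inl)) u + if u = v then x (.inl v) - x (.inr 0) else 0 := by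
  rw [lapR_mulVec_apply, lapR_mulVec_apply, Fintype.sum_sum_type]
  by_cases hu : u = v <;> simp [hu]

lemma lapR_attachPath_mulVec_inr (x : V ⊕ Fin m → ℝ) (i : Fin m) :
    (lapR (attachPath G v m) *ᵥ x) (.inr i)
      = (lapR (pathGraph m) *ᵥ (x ∘ .inr)) i + if i = 0 then x (.inr 0) - x (.inl v) else 0 := by
  rw [lapR_mulVec_apply, lapR_mulVec_apply, Fintype.sum_sum_type, add_comm]
  by_cases hi : i = 0 <;> simp [hi]

end Laplacian

section PendantP3
variable {V : Type} [Fintype V] [DecidableEq V] {G : SimpleGraph V} {v : V}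

lemma lapR_pathGraph_three_mulVec (y : Fin 3 → ℝ) :
    lapR (pathGraph 3) *ᵥ y = ![y 0 - y 1, (y 1 - y 0) + (y 1 - y 2), y 2 - y 1] := by
  ext i
  fin_cases i <;> simp [lapR_mulVec_apply, Fin.sum_univ_three, pathGraph_adj]

lemma lapR_attachPath_three_mulVec_eq_self_iff (x : V ⊕ Fin 3 → ℝ) :
    lapR (attachPath G v 3) *ᵥ x = x ↔
      lapR G *ᵥ (x ∘ .inl) = x ∘ .inl ∧ x ∘ .inr = ![x (.inl v), 0, -x (.inl v)] := by
  have row_inl (h : x (.inr 0) = x (.inl v)) (u : V) :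
      (lapR (attachPath G v 3) *ᵥ x) (.inl u) = (lapR G *ᵥ (x ∘ .inl)) u := by
    simp [lapR_attachPath_mulVec_inl, h]
  have row_inr (i : Fin 3) := lapR_attachPath_mulVec_inr (G := G) (v := v) x i
  simp only [lapR_pathGraph_three_mulVec] at row_inr
  constructor
  · intro h
    have h0 := row_inr 0
    have h1 := row_inr 1
    have h2 := row_inr 2
    simp only [congrFun h, Function.comp_apply, cons_val_zero, cons_val_one, cons_val,
      ↓reduceIte, one_ne_zero, Fin.reduceEq, add_zero] at h0 h1 h2
    have hpath : x ∘ .inr = ![x (.inl v), 0, -x (.inl v)] := by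
      ext i; fin_cases i <;> simp <;> linarith
    refine ⟨funext fun u => ?_, hpath⟩
    rw [← row_inl (congrFun hpath 0), h]
    rfl
  · rintro ⟨hG, hpath⟩
    have hx : ∀ i, x (.inr i) = ![x (.inl v), 0, -x (.inl v)] i := congrFun hpath
    ext (u | i)
    · rw [row_inl (hx 0), hG]
      rfl
    · fin_cases i <;> simp [row_inr, hx]

def extendAcrossP3 (v : V) : (V → ℝ) →ₗ[ℝ] V ⊕ Fin 3 → ℝ where
  toFun y := Sum.elim y ![y v, 0, -y v]
  map_add' y z := by
    ext (u | i)
    · rfl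
    · fin_cases i <;> simp [add_comm]
  map_smul' c y := by
    ext (u | i)
    · rfl
    · fin_cases i <;> simp

omit [Fintype V] [DecidableEq V] in
lemma extendAcrossP3_injective : Function.Injective (extendAcrossP3 v) :=
  fun _ _ h => funext fun u => congrFun h (.inl u)

lemma eigenspace_lapR_attachPath_three_one :
    eigenspace (toLin' (lapR (attachPath G v 3))) 1
      = (eigenspace (toLin' (lapR G)) 1).map (extendAcrossP3 v) := by
  ext x
  simp only [Submodule.mem_map, mem_eigenspace_iff, toLin'_apply, one_smul,
    lapR_attachPath_three_mulVec_eq_self_iff]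
  constructor
  · rintro ⟨hG, hpath⟩
    refine ⟨x ∘ .inl, hG, ?_⟩
    ext (u | i)
    · rfl
    · exact (congrFun hpath i).symm
  · rintro ⟨y, hy, rfl⟩
    exact ⟨hy, by ext i; fin_cases i <;> rfl⟩

end PendantP3

/-- Attaching a path `P_3` by an edge to a vertex of `G` does not change the multiplicity
of `1` as a Laplacian eigenvalue. -/
theorem attach_P3_eigenvalue_one {V : Type} [Fintype V] [DecidableEq V]
    (G : SimpleGraph V) (v : V) :
    mEig (attachPath G v 3) 1 = mEig G 1 := by
  rw [mEig, mEig, lapEigs, lapEigs,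
    (isHermitian_lapR _).count_roots_charpoly_eq_finrank_eigenspace,
    (isHermitian_lapR _).count_roots_charpoly_eq_finrank_eigenspace,
    eigenspace_lapR_attachPath_three_one]
  exact (Submodule.equivMapOfInjective _ extendAcrossP3_injective _).finrank_eq.symm
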